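/- Let X ∈ ℝ^{n×d} be full rank with all size-s subsets of rows full rank, d ≤ s ≤ n, and let S be drawn by size-s volume sampling. Then E[‖(I_S X)^+‖_F²] = ((n−d+1)/(s−d+1)) · ‖X^+‖_F², where ‖·‖_F is the Frobenius norm. -/

import Mathlib

open Matrix Finset

noncomputable section

/-- The submatrix of `X` consisting of the rows indexed by the subset `S`. -/
def rowSub {n d : ℕ} (X : Matrix (Fin n) (Fin d) ℝ) (S : Finset (Fin n)) :
    Matrix {i // i ∈ S} (Fin d) ℝ :=
  X.submatrix (fun i => (i : Fin n)) id

/-- `X_S^⊤ X_S`. -/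
def gram {n d : ℕ} (X : Matrix (Fin n) (Fin d) ℝ) (S : Finset (Fin n)) :
    Matrix (Fin d) (Fin d) ℝ :=
  (rowSub X S)ᵀ * rowSub X S

/-- The four Penrose conditions characterizing the Moore–Penrose pseudoinverse. -/
def IsMoorePenrose {m p : Type*} [Fintype m] [Fintype p]
    (A : Matrix m p ℝ) (B : Matrix p m ℝ) : Prop :=
  A * B * A = A ∧ B * A * B = B ∧ (A * B)ᵀ = A * B ∧ (B * A)ᵀ = B * A

/-- The Moore–Penrose pseudoinverse `A⁺` of a real matrix. -/
def pinv {m p : Type*} [Fintype m] [Fintype p] (A : Matrix m p ℝ) : Matrix p m ℝ := by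
  classical exact if h : ∃ B, IsMoorePenrose A B then h.choose else 0

/-- The diagonal 0/1 selection matrix `I_S`. -/
def sel {n : ℕ} (S : Finset (Fin n)) : Matrix (Fin n) (Fin n) ℝ :=
  Matrix.diagonal (fun i => if i ∈ S then 1 else 0)

/-!
With `G_S = Xᵀ I_S X`, the pseudoinverse of `I_S X` is `G_S⁻¹ (I_S X)ᵀ`, so
`‖(I_S X)⁺‖_F² = tr G_S⁻¹ = tr (adj G_S) / det G_S` and the volume-sampling weight `det G_S`
cancels the denominator. The trace of the adjugate is the sum of the principal minors of order
`d - 1`, and the minor at `j` is again a Gram determinant `det (X_jᵀ I_S X_j)`, where `X_j` is `X`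
without its `j`-th column. Expanding `det (Yᵀ I_S Z)` multilinearly in its rows (Cauchy–Binet), a
sum over all `s`-subsets `S` counts every `k`-subset of rows `choose (n - k) (s - k)` times, so it
equals `choose (n - k) (s - k) * det (Yᵀ Z)`. Using this with `k = d - 1` in the numerator and
`k = d` in the normalisation leaves the ratio `choose (n-d+1) (s-d+1) / choose (n-d) (s-d)`,
which is `(n - d + 1) / (s - d + 1)`.
-/

section PseudoInverse

variable {m p : Type*} [Fintype m] [Fintype p]

theorem IsMoorePenrose.unique {A : Matrix m p ℝ} {B C : Matrix p m ℝ}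
    (hB : IsMoorePenrose A B) (hC : IsMoorePenrose A C) : B = C := by
  obtain ⟨hB₁, hB₂, hB₃, hB₄⟩ := hB
  obtain ⟨hC₁, hC₂, hC₃, hC₄⟩ := hC
  have hAB : A * B = A * C := by
    calc A * B = ((A * C) * (A * B))ᵀ := by rw [← Matrix.mul_assoc, hC₁, hB₃]
      _ = A * C := by rw [transpose_mul, hB₃, hC₃, ← Matrix.mul_assoc, hB₁]
  have hBA : B * A = C * A := by
    calc B * A = ((B * A) * (C * A))ᵀ := by rw [Matrix.mul_assoc, ← Matrix.mul_assoc A, hC₁, hB₄]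
      _ = C * A := by rw [transpose_mul, hB₄, hC₄, Matrix.mul_assoc, ← Matrix.mul_assoc A, hB₁]
  calc B = B * A * B := hB₂.symm
    _ = C * A * C := by rw [hBA, Matrix.mul_assoc, hAB, ← Matrix.mul_assoc]
    _ = C := hC₂

variable [DecidableEq p]

theorem isMoorePenrose_inv_transpose_mul_self_mul_transpose (A : Matrix m p ℝ)
    (h : IsUnit (Aᵀ * A).det) : IsMoorePenrose A ((Aᵀ * A)⁻¹ * Aᵀ) := by
  have hleft : (Aᵀ * A)⁻¹ * Aᵀ * A = 1 := by rw [Matrix.mul_assoc, nonsing_inv_mul _ h]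
  have hsymm : ((Aᵀ * A)⁻¹)ᵀ = (Aᵀ * A)⁻¹ := by
    rw [transpose_nonsing_inv, transpose_mul, transpose_transpose]
  refine ⟨?_, ?_, ?_, ?_⟩
  · rw [Matrix.mul_assoc A, hleft, Matrix.mul_one]
  · rw [hleft, Matrix.one_mul]
  · simp only [transpose_mul, transpose_transpose, hsymm, Matrix.mul_assoc]
  · rw [hleft, transpose_one]

theorem pinv_eq_inv_transpose_mul_self_mul_transpose (A : Matrix m p ℝ)
    (h : IsUnit (Aᵀ * A).det) : pinv A = (Aᵀ * A)⁻¹ * Aᵀ := by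
  have hA := isMoorePenrose_inv_transpose_mul_self_mul_transpose A h
  have hex : ∃ B, IsMoorePenrose A B := ⟨_, hA⟩
  rw [pinv, dif_pos hex]
  exact hex.choose_spec.unique hA

theorem sum_sq_pinv_eq_trace_inv (A : Matrix m p ℝ) (h : IsUnit (Aᵀ * A).det) :
    ∑ a, ∑ b, pinv A a b ^ 2 = trace (Aᵀ * A)⁻¹ := by
  have hsymm : ((Aᵀ * A)⁻¹)ᵀ = (Aᵀ * A)⁻¹ := by
    rw [transpose_nonsing_inv, transpose_mul, transpose_transpose]
  have hfrob : ∑ a, ∑ b, pinv A a b ^ 2 = trace (pinv A * (pinv A)ᵀ) := by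
    simp [trace, mul_apply, sq]
  rw [hfrob, pinv_eq_inv_transpose_mul_self_mul_transpose A h, transpose_mul, transpose_transpose,
    hsymm, Matrix.mul_assoc, ← Matrix.mul_assoc Aᵀ, mul_nonsing_inv _ h, Matrix.mul_one]

end PseudoInverse

theorem isUnit_det_transpose_mul_self_of_rank_eq {m p : Type*} [Fintype m] [Fintype p]
    [DecidableEq p] {A : Matrix m p ℝ} (h : A.rank = Fintype.card p) :
    IsUnit (Aᵀ * A).det := by
  rw [← rank_transpose_mul_self] at h
  have hrange : LinearMap.range (Aᵀ * A).mulVecLin = ⊤ :=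
    Submodule.eq_top_of_finrank_eq (h.trans (Module.finrank_fintype_fun_eq_card ℝ).symm)
  rw [← isUnit_iff_isUnit_det, ← mulVec_surjective_iff_isUnit]
  exact LinearMap.range_eq_top.mp hrange

theorem trace_inv_eq_trace_adjugate_div_det {n K : Type*} [Fintype n] [DecidableEq n] [Field K]
    (M : Matrix n n K) : trace M⁻¹ = trace (adjugate M) / det M := by
  rw [Matrix.inv_def, trace_smul, Ring.inverse_eq_inv, smul_eq_mul, div_eq_inv_mul]

theorem det_transpose_mul_diagonal_mul {ι κ R : Type*} [Fintype ι] [DecidableEq ι] [Fintype κ]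
    [DecidableEq κ] [CommRing R] (Y Z : Matrix ι κ R) (t : ι → R) :
    det (Yᵀ * diagonal t * Z) =
      ∑ f : κ → ι, (∏ j, t (f j) * Y (f j) j) * det (Z.submatrix f id) := by
  have hrows : Yᵀ * diagonal t * Z = fun j => ∑ i, (t i * Y i j) • Z i := by
    ext j l
    rw [Matrix.mul_assoc, mul_apply]
    simp only [diagonal_mul, transpose_apply, Finset.sum_apply, Pi.smul_apply, smul_eq_mul]
    exact Finset.sum_congr rfl fun i _ => by ring
  let D : (κ → R) [⋀^κ]→ₗ[R] R := detRowAlternating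
  calc det (Yᵀ * diagonal t * Z) = D (fun j => ∑ i, (t i * Y i j) • Z i) := by rw [← hrows]; rfl
    _ = ∑ f : κ → ι, D (fun j => (t (f j) * Y (f j) j) • Z (f j)) := D.map_sum _
    _ = _ := by
      refine Finset.sum_congr rfl fun f _ => ?_
      rw [D.map_smul_univ (fun j => t (f j) * Y (f j) j) (fun j => Z (f j))]
      rfl

theorem det_submatrix_eq_zero_of_not_injective {ι κ R : Type*} [Fintype κ] [DecidableEq κ]
    [CommRing R] (Z : Matrix ι κ R) {f : κ → ι}
    (hf : ¬ Function.Injective f) : det (Z.submatrix f id) = 0 := by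
  obtain ⟨a, b, hab, hne⟩ := Function.not_injective_iff.mp hf
  exact det_zero_of_row_eq hne (by ext; simp [hab])

theorem sum_powersetCard_prod_indicator {n : ℕ} {κ : Type*} [Fintype κ] {f : κ → Fin n}
    (hf : Function.Injective f) {s : ℕ} (hs : Fintype.card κ ≤ s) :
    ∑ S ∈ powersetCard s (univ : Finset (Fin n)), ∏ j, (if f j ∈ S then (1 : ℝ) else 0) =
      (n - Fintype.card κ).choose (s - Fintype.card κ) := by
  have hcard : #(univ.image f) = Fintype.card κ := card_image_of_injective _ hf
  have hmem (S : Finset (Fin n)) : (∀ j, f j ∈ S) ↔ univ.image f ⊆ S := by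
    simp [image_subset_iff]
  simp_rw [Fintype.prod_boole, hmem, sum_boole]
  rw [card_filter_powersetCard_subset _ _ _ (subset_univ _) (hcard ▸ hs), hcard, card_univ,
    Fintype.card_fin]

theorem sum_det_transpose_mul_sel_mul {n : ℕ} {κ : Type*} [Fintype κ] [DecidableEq κ]
    (Y Z : Matrix (Fin n) κ ℝ) {s : ℕ} (hs : Fintype.card κ ≤ s) :
    ∑ S ∈ powersetCard s (univ : Finset (Fin n)), det (Yᵀ * sel S * Z) =
      (n - Fintype.card κ).choose (s - Fintype.card κ) * det (Yᵀ * Z) := by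
  have hexp := det_transpose_mul_diagonal_mul Y Z fun _ => 1
  rw [diagonal_one, Matrix.mul_one] at hexp
  simp_rw [sel, det_transpose_mul_diagonal_mul, hexp, mul_sum]
  rw [sum_comm]
  refine sum_congr rfl fun f _ => ?_
  by_cases hf : Function.Injective f
  · simp_rw [prod_mul_distrib, ← mul_assoc, ← sum_mul, sum_powersetCard_prod_indicator hf hs]
    simp
  · simp [det_submatrix_eq_zero_of_not_injective Z hf]

theorem trace_adjugate_eq_sum_det_submatrix_succAbove {m : ℕ} {R : Type*} [CommRing R]
    (G : Matrix (Fin (m + 1)) (Fin (m + 1)) R) :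
    trace (adjugate G) = ∑ j : Fin (m + 1), det (G.submatrix j.succAbove j.succAbove) := by
  refine sum_congr rfl fun j _ => ?_
  rw [diag_apply, adjugate_fin_succ_eq_det_submatrix, ← two_mul, pow_mul, neg_one_sq, one_pow,
    one_mul]

theorem submatrix_transpose_mul_mul {ι κ κ' α β R : Type*} [Fintype ι] [CommRing R]
    (Y : Matrix ι κ R) (M : Matrix ι ι R) (Z : Matrix ι κ' R) (e : α → κ) (e' : β → κ') :
    (Yᵀ * M * Z).submatrix e e' = (Y.submatrix id e)ᵀ * M * Z.submatrix id e' := by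
  ext a b
  simp [mul_apply]

theorem sum_trace_adjugate_transpose_mul_sel_mul {n m : ℕ} (X : Matrix (Fin n) (Fin (m + 1)) ℝ)
    {s : ℕ} (hms : m ≤ s) :
    ∑ S ∈ powersetCard s (univ : Finset (Fin n)), trace (adjugate (Xᵀ * sel S * X)) =
      (n - m).choose (s - m) * trace (adjugate (Xᵀ * X)) := by
  have hminor (j : Fin (m + 1)) := sum_det_transpose_mul_sel_mul
    (X.submatrix id j.succAbove) (X.submatrix id j.succAbove) (s := s) (by simpa using hms)
  rw [Fintype.card_fin] at hminor
  have hX (j : Fin (m + 1)) := submatrix_transpose_mul_mul X 1 X j.succAbove j.succAbove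
  simp only [Matrix.mul_one] at hX
  simp_rw [trace_adjugate_eq_sum_det_submatrix_succAbove, submatrix_transpose_mul_mul, hX]
  rw [sum_comm, mul_sum]
  exact sum_congr rfl fun j _ => hminor j

theorem gram_eq_transpose_mul_sel_mul {n d : ℕ} (X : Matrix (Fin n) (Fin d) ℝ)
    (S : Finset (Fin n)) : gram X S = Xᵀ * sel S * X := by
  ext a b
  rw [mul_apply]
  simp only [sel, mul_diagonal, transpose_apply, mul_ite, mul_one, mul_zero, ite_mul, zero_mul,
    sum_ite_mem, univ_inter]
  exact sum_coe_sort S fun i => X i a * X i b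

theorem transpose_sel_mul_mul_sel_mul {n d : ℕ} (X : Matrix (Fin n) (Fin d) ℝ)
    (S : Finset (Fin n)) : (sel S * X)ᵀ * (sel S * X) = Xᵀ * sel S * X := by
  have hsel : (sel S)ᵀ * sel S = sel S := by simp [sel, diagonal_mul_diagonal]
  rw [transpose_mul, Matrix.mul_assoc, ← Matrix.mul_assoc (sel S)ᵀ, hsel, Matrix.mul_assoc]

theorem cast_choose_succ_succ (N K : ℕ) :
    ((N + 1).choose (K + 1) : ℝ) = (N + 1) / (K + 1) * N.choose K := by
  have h := congrArg (Nat.cast (R := ℝ)) (Nat.add_one_mul_choose_eq N K)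
  push_cast at h
  field_simp
  linarith

theorem volume_sampling_frobenius_general {n d : ℕ} (X : Matrix (Fin n) (Fin d) ℝ)
    (hrank : X.rank = d) (s : ℕ) (hds : d ≤ s) (hsn : s ≤ n)
    (hfull : ∀ S ∈ Finset.powersetCard s (Finset.univ : Finset (Fin n)),
      (gram X S).det ≠ 0) :
    ∑ S ∈ Finset.powersetCard s (Finset.univ : Finset (Fin n)),
        ((gram X S).det / (((n - d).choose (s - d) : ℝ) * (Xᵀ * X).det)) *
          (∑ a, ∑ b, (pinv (sel S * X) a b) ^ 2)
      = (((n : ℝ) - d + 1) / ((s : ℝ) - d + 1)) * ∑ a, ∑ b, (pinv X a b) ^ 2 := by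
  rcases d with _ | m
  · simp
  have hX : IsUnit (Xᵀ * X).det :=
    isUnit_det_transpose_mul_self_of_rank_eq (hrank.trans (Fintype.card_fin _).symm)
  set c : ℝ := (((n - (m + 1)).choose (s - (m + 1)) : ℕ) : ℝ) with hc
  have hc₀ : c ≠ 0 := Nat.cast_ne_zero.mpr (Nat.choose_pos (by omega)).ne'
  have hterm : ∀ S ∈ powersetCard s (univ : Finset (Fin n)),
      (gram X S).det / (c * (Xᵀ * X).det) * ∑ a, ∑ b, pinv (sel S * X) a b ^ 2 =
        trace (adjugate (Xᵀ * sel S * X)) / (c * (Xᵀ * X).det) := by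
    intro S hS
    have hdet := hfull S hS
    rw [gram_eq_transpose_mul_sel_mul] at hdet ⊢
    rw [sum_sq_pinv_eq_trace_inv _ (by rw [transpose_sel_mul_mul_sel_mul]; exact hdet.isUnit),
      transpose_sel_mul_mul_sel_mul, trace_inv_eq_trace_adjugate_div_det]
    field_simp
  rw [sum_congr rfl hterm, ← sum_div, sum_trace_adjugate_transpose_mul_sel_mul X (by omega),
    sum_sq_pinv_eq_trace_inv X hX, trace_inv_eq_trace_adjugate_div_det,
    show n - m = n - (m + 1) + 1 by omega, show s - m = s - (m + 1) + 1 by omega,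
    cast_choose_succ_succ, ← hc]
  push_cast [Nat.cast_sub hds, Nat.cast_sub (hds.trans hsn)]
  field_simp

/-- Frobenius-norm formula: under full support,
`E[‖(I_S X)⁺‖_F²] = ((n−d+1)/(s−d+1)) ‖X⁺‖_F²`. -/
theorem volume_sampling_frobenius {n d : ℕ} (X : Matrix (Fin n) (Fin d) ℝ)
    (hrank : X.rank = d) (hdn : d ≤ n) (s : ℕ) (hds : d ≤ s) (hsn : s ≤ n)
    (hfull : ∀ S ∈ Finset.powersetCard s (Finset.univ : Finset (Fin n)),
      (gram X S).det ≠ 0) :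
    ∑ S ∈ Finset.powersetCard s (Finset.univ : Finset (Fin n)),
        ((gram X S).det / (((n - d).choose (s - d) : ℝ) * (Xᵀ * X).det)) *
          (∑ a, ∑ b, (pinv (sel S * X) a b) ^ 2)
      = (((n : ℝ) - d + 1) / ((s : ℝ) - d + 1)) * ∑ a, ∑ b, (pinv X a b) ^ 2 :=
  volume_sampling_frobenius_general X hrank s hds hsn hfull
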